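/- arXiv:1803.02695 — 9 statements merged into one kernel-verified Lean document; each statement's English description precedes it below -/
import Mathlib

section
/- The reparameterized Altes chirplet frequency response U is an admissible wavelet: U is square integrable over ℝ (∫_ℝ |U(ω)|² dω < ∞), and its admissibility integral is finite (∫_ℝ |U(ω)|²/|ω| dω < ∞). -/
/-!
On `ω > 0` the chirp factor has modulus one, so `|U(ω)|²` is the log-normal profile
`exp (-2κ (log ω - log ω₀)²)`. Substituting `ω = eᵗ` turns `ω ^ s · |U(ω)|² dω` into
`exp (-2κ t² + (s + 1 + 4κ log ω₀) t + const) dt`, a Gaussian, so every real moment of `|U|²`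
on `(0, ∞)` is finite; the cases `s = 0` and `s = -1` are the two claims.
-/

open MeasureTheory

/-- The reparameterized Altes chirplet frequency response. -/
noncomputable def altes (κ ω₀ lam : ℝ) : ℝ → ℂ := fun ω =>
  if 0 < ω then
    Complex.exp (-(↑(κ * (Real.log (ω / ω₀)) ^ 2) : ℂ)) *
      Complex.exp (2 * Real.pi * Complex.I * Real.log ω / Real.log lam)
  else 0

open Real Set Function

theorem integrable_exp_neg_mul_sq_add_mul_add {b : ℝ} (hb : 0 < b) (c d : ℝ) :
    Integrable fun x : ℝ => exp (-b * x ^ 2 + c * x + d) := by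
  have := (integrable_cexp_quadratic (b := b) (by simpa using hb) c d).norm
  simpa only [Complex.norm_exp, ← Complex.ofReal_neg, ← Complex.ofReal_pow, ← Complex.ofReal_mul,
    ← Complex.ofReal_add, Complex.ofReal_re] using this

theorem integrableOn_Ioi_zero_iff_integrable_comp_exp {E : Type*} [NormedAddCommGroup E]
    [NormedSpace ℝ E] (g : ℝ → E) :
    IntegrableOn g (Ioi 0) ↔ Integrable fun t => exp t • g (exp t) := by
  rw [← range_exp, ← image_univ,
    integrableOn_image_iff_integrableOn_abs_deriv_smul MeasurableSet.univ
      (fun x _ => (hasDerivAt_exp x).hasDerivWithinAt) exp_injective.injOn, integrableOn_univ]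
  simp only [abs_of_pos (exp_pos _)]

theorem integrableOn_Ioi_rpow_mul_exp_neg_mul_log_sub_sq {c : ℝ} (hc : 0 < c) (a s : ℝ) :
    IntegrableOn (fun ω => ω ^ s * exp (-(c * (log ω - a) ^ 2))) (Ioi 0) := by
  rw [integrableOn_Ioi_zero_iff_integrable_comp_exp]
  refine (integrable_exp_neg_mul_sq_add_mul_add hc (s + 1 + 2 * c * a) (-(c * a ^ 2))).congr
    (Filter.Eventually.of_forall fun t => ?_)
  simp only [log_exp, smul_eq_mul, ← exp_mul, ← exp_add]
  ring_nf

theorem altes_of_nonpos (κ ω₀ lam : ℝ) {ω : ℝ} (hω : ω ≤ 0) : altes κ ω₀ lam ω = 0 :=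
  if_neg hω.not_gt

theorem sq_norm_altes (κ lam : ℝ) {ω₀ ω : ℝ} (hω₀ : 0 < ω₀) (hω : 0 < ω) :
    ‖altes κ ω₀ lam ω‖ ^ 2 = exp (-(2 * κ * (log ω - log ω₀) ^ 2)) := by
  have hchirp : ‖Complex.exp (2 * π * Complex.I * log ω / log lam)‖ = 1 := by
    rw [Complex.norm_exp]
    simp [Complex.div_re]
  rw [altes, if_pos hω, norm_mul, hchirp, mul_one, Complex.norm_exp, Complex.neg_re,
    Complex.ofReal_re, ← exp_nat_mul, log_div hω.ne' hω₀.ne']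
  push_cast
  ring_nf

theorem altes_admissible_general (κ ω₀ lam : ℝ) (hκ : 0 < κ) (hω₀ : 0 < ω₀) :
    Integrable (fun ω : ℝ => ‖altes κ ω₀ lam ω‖ ^ 2) ∧
      Integrable (fun ω : ℝ => ‖altes κ ω₀ lam ω‖ ^ 2 / |ω|) := by
  have hmoment := integrableOn_Ioi_rpow_mul_exp_neg_mul_log_sub_sq (by positivity : 0 < 2 * κ)
    (log ω₀)
  have hsupp : ∀ φ : ℝ → ℝ, support (fun ω => ‖altes κ ω₀ lam ω‖ ^ 2 / φ ω) ⊆ Ioi 0 :=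
    fun φ ω hω => mem_Ioi.2 <| lt_of_not_ge fun h => hω (by simp [altes_of_nonpos κ ω₀ lam h])
  constructor
  · refine (integrableOn_iff_integrable_of_support_subset (by simpa using hsupp 1)).1
      ((hmoment 0).congr_fun (fun ω hω => ?_) measurableSet_Ioi)
    dsimp only
    rw [sq_norm_altes κ lam hω₀ hω, rpow_zero, one_mul]
  · refine (integrableOn_iff_integrable_of_support_subset (hsupp abs)).1
      ((hmoment (-1)).congr_fun (fun ω hω => ?_) measurableSet_Ioi)
    dsimp only
    rw [sq_norm_altes κ lam hω₀ hω, rpow_neg_one, abs_of_pos hω, inv_mul_eq_div]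

/-- The Altes chirplet is an admissible wavelet: it is square
integrable over ℝ and its admissibility integral is finite. -/
theorem altes_admissible (κ ω₀ lam : ℝ) (hκ : 0 < κ) (hω₀ : 0 < ω₀)
    (hlam : 0 < lam) (hlam1 : lam ≠ 1) :
    Integrable (fun ω : ℝ => ‖altes κ ω₀ lam ω‖ ^ 2) ∧
      Integrable (fun ω : ℝ => ‖altes κ ω₀ lam ω‖ ^ 2 / |ω|) :=
  altes_admissible_general κ ω₀ lam hκ hω₀
end

section
/- The energy of the Altes chirplet is ∫_ℝ |U(ω)|² dω = ω₀·√(π/(2κ))·exp(1/(8κ)); equivalently (1/2π)∫_ℝ |U(ω)|² dω = (ω₀/√(8πκ))·exp(1/(8κ)). -/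
/-!
The chirp factor `exp(2πi log ω / log λ)` is unimodular, so `|U(ω)|²` is the log-normal profile
`exp(-2κ log²(ω/ω₀))` on `ω > 0`. The substitution `ω = ω₀ eᵗ` turns the energy into
`ω₀ ∫ eᵗ e^{-2κt²} dt`, which is a Gaussian integral after completing the square.
-/

open MeasureTheory

open Real Set

theorem norm_sq_altes (κ ω₀ lam ω : ℝ) :
    ‖altes κ ω₀ lam ω‖ ^ 2 =
      (Ioi 0).indicator (fun ω ↦ exp (-(2 * κ) * log (ω / ω₀) ^ 2)) ω := by
  by_cases hω : 0 < ω
  · have hchirp : 2 * π * Complex.I * log ω / log lam = ↑(2 * π * log ω / log lam) * Complex.I := by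
      push_cast; ring
    rw [altes, if_pos hω, indicator_of_mem (mem_Ioi.mpr hω), hchirp, norm_mul,
      Complex.norm_exp_ofReal_mul_I, mul_one, Complex.norm_exp, Complex.neg_re,
      Complex.ofReal_re, ← exp_nat_mul]
    congr 1
    push_cast; ring
  · simp [altes, hω]

theorem integral_Ioi_comp_log_div {E : Type*} [NormedAddCommGroup E] [NormedSpace ℝ E]
    (g : ℝ → E) {c : ℝ} (hc : 0 < c) :
    ∫ x in Ioi 0, g (log (x / c)) = c • ∫ t, exp t • g t := by
  have himage : (fun t ↦ c * exp t) '' univ = Ioi 0 := by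
    ext x
    refine ⟨?_, fun hx ↦ ⟨log (x / c), trivial, ?_⟩⟩
    · rintro ⟨t, -, rfl⟩
      exact mul_pos hc (exp_pos t)
    · simp only [exp_log (div_pos hx hc), mul_div_cancel₀ x hc.ne']
  rw [← himage, integral_image_eq_integral_abs_deriv_smul MeasurableSet.univ
      (fun t _ ↦ ((hasDerivAt_exp t).const_mul c).hasDerivWithinAt)
      (fun s _ t _ h ↦ exp_injective (mul_left_cancel₀ hc.ne' h)),
    setIntegral_univ, ← integral_smul]
  congr 1 with t
  rw [abs_of_pos (mul_pos hc (exp_pos t)), mul_div_cancel_left₀ _ hc.ne', log_exp, mul_smul]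

theorem integral_exp_mul_mul_exp_neg_mul_sq {b : ℝ} (hb : 0 < b) (c : ℝ) :
    ∫ t, exp (c * t) * exp (-b * t ^ 2) = sqrt (π / b) * exp (c ^ 2 / (4 * b)) := by
  have hsquare : ∀ t, exp (c * t) * exp (-b * t ^ 2) =
      exp (c ^ 2 / (4 * b)) * exp (-b * (t - c / (2 * b)) ^ 2) := by
    intro t
    rw [← exp_add, ← exp_add]
    congr 1
    field_simp
    ring
  simp_rw [hsquare]
  rw [integral_const_mul, integral_sub_right_eq_self (fun t ↦ exp (-b * t ^ 2)),
    integral_gaussian, mul_comm]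

theorem altes_energy_general (κ ω₀ lam : ℝ) (hκ : 0 < κ) (hω₀ : 0 < ω₀) :
    (∫ ω : ℝ, ‖altes κ ω₀ lam ω‖ ^ 2) =
      ω₀ * Real.sqrt (Real.pi / (2 * κ)) * Real.exp (1 / (8 * κ)) ∧
    (1 / (2 * Real.pi)) * (∫ ω : ℝ, ‖altes κ ω₀ lam ω‖ ^ 2) =
      (ω₀ / Real.sqrt (8 * Real.pi * κ)) * Real.exp (1 / (8 * κ)) := by
  have hgauss := integral_exp_mul_mul_exp_neg_mul_sq (b := 2 * κ) (by positivity) 1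
  simp only [one_mul, one_pow] at hgauss
  have henergy : ∫ ω, ‖altes κ ω₀ lam ω‖ ^ 2 = ω₀ * sqrt (π / (2 * κ)) * exp (1 / (8 * κ)) := by
    simp_rw [norm_sq_altes]
    rw [integral_indicator measurableSet_Ioi,
      integral_Ioi_comp_log_div (fun t ↦ exp (-(2 * κ) * t ^ 2)) hω₀]
    simp_rw [smul_eq_mul]
    rw [hgauss]
    ring_nf
  have hsqrt : 1 / (2 * π) * sqrt (π / (2 * κ)) = 1 / sqrt (8 * π * κ) := by
    rw [div_mul_eq_mul_div, one_mul, div_eq_div_iff (by positivity) (by positivity),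
      one_mul, ← sqrt_mul (by positivity),
      show π / (2 * κ) * (8 * π * κ) = (2 * π) ^ 2 by field_simp; ring]
    exact sqrt_sq (by positivity)
  refine ⟨henergy, ?_⟩
  rw [henergy, ← mul_assoc, mul_left_comm, hsqrt]
  ring

/-- The energy of the Altes chirplet is
∫ |U(ω)|² dω = ω₀·√(π/(2κ))·exp(1/(8κ)); equivalently
(1/2π)∫ |U(ω)|² dω = (ω₀/√(8πκ))·exp(1/(8κ)). -/
theorem altes_energy (κ ω₀ lam : ℝ) (hκ : 0 < κ) (hω₀ : 0 < ω₀)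
    (hlam : 0 < lam) (hlam1 : lam ≠ 1) :
    (∫ ω : ℝ, ‖altes κ ω₀ lam ω‖ ^ 2) =
      ω₀ * Real.sqrt (Real.pi / (2 * κ)) * Real.exp (1 / (8 * κ)) ∧
    (1 / (2 * Real.pi)) * (∫ ω : ℝ, ‖altes κ ω₀ lam ω‖ ^ 2) =
      (ω₀ / Real.sqrt (8 * Real.pi * κ)) * Real.exp (1 / (8 * κ)) :=
  altes_energy_general κ ω₀ lam hκ hω₀
end

section
/- The admissibility constant of the Altes chirplet equals ∫_{0}^{∞} |U(ω)|²/ω dω = √(π/(2κ)). -/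
/-! The chirp factor has modulus one, so `|U(ω)|²/ω` is a log-normal density in `ω`; the
substitution `ω = eˣ` turns `dω/ω` into `dx` and the integral into a Gaussian one,
`∫ exp (-2κ (x - log ω₀)²) dx = √(π/(2κ))`. -/

open MeasureTheory

open Real Set

theorem norm_altes_sq (κ ω₀ lam : ℝ) {ω : ℝ} (hω : 0 < ω) :
    ‖altes κ ω₀ lam ω‖ ^ 2 = exp (-(2 * κ) * log (ω / ω₀) ^ 2) := by
  have hchirp : (2 * π * Complex.I * log ω / log lam).re = 0 := by
    simp [Complex.div_re, Complex.mul_re, Complex.mul_im]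
  rw [altes, if_pos hω, norm_mul, Complex.norm_exp, Complex.norm_exp, hchirp, Complex.neg_re,
    Complex.ofReal_re, Real.exp_zero, mul_one, ← Real.exp_nat_mul]
  ring_nf

theorem integral_Ioi_inv_smul_comp_log {E : Type*} [NormedAddCommGroup E] [NormedSpace ℝ E]
    (f : ℝ → E) : ∫ ω in Ioi 0, ω⁻¹ • f (log ω) = ∫ x, f x := by
  have hderiv : ∀ x ∈ (univ : Set ℝ), HasDerivWithinAt exp (exp x) univ x :=
    fun x _ => (hasDerivAt_exp x).hasDerivWithinAt
  rw [← range_exp, ← image_univ, integral_image_eq_integral_abs_deriv_smul MeasurableSet.univ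
    hderiv exp_injective.injOn, Measure.restrict_univ]
  congr 1 with x
  rw [log_exp, smul_smul, abs_of_pos (exp_pos x), mul_inv_cancel₀ (exp_ne_zero x), one_smul]

theorem altes_admissibility_constant_general (κ ω₀ lam : ℝ) (hω₀ : 0 < ω₀) :
    (∫ ω in Set.Ioi (0 : ℝ), ‖altes κ ω₀ lam ω‖ ^ 2 / ω) =
      Real.sqrt (Real.pi / (2 * κ)) := by
  have hintegrand : ∀ ω ∈ Ioi (0 : ℝ), ‖altes κ ω₀ lam ω‖ ^ 2 / ω =
      ω⁻¹ • exp (-(2 * κ) * (log ω - log ω₀) ^ 2) := fun ω hω => by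
    rw [norm_altes_sq κ ω₀ lam hω, log_div (ne_of_gt hω) hω₀.ne', smul_eq_mul, inv_mul_eq_div]
  rw [setIntegral_congr_fun measurableSet_Ioi hintegrand,
    integral_Ioi_inv_smul_comp_log (fun x => exp (-(2 * κ) * (x - log ω₀) ^ 2)),
    integral_sub_right_eq_self (fun x => exp (-(2 * κ) * x ^ 2)), integral_gaussian]

/-- The admissibility constant of the Altes chirplet equals
∫₀^∞ |U(ω)|²/ω dω = √(π/(2κ)). -/
theorem altes_admissibility_constant (κ ω₀ lam : ℝ) (hκ : 0 < κ) (hω₀ : 0 < ω₀)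
    (hlam : 0 < lam) (hlam1 : lam ≠ 1) :
    (∫ ω in Set.Ioi (0 : ℝ), ‖altes κ ω₀ lam ω‖ ^ 2 / ω) =
      Real.sqrt (Real.pi / (2 * κ)) :=
  altes_admissibility_constant_general κ ω₀ lam hω₀
end

section
/- The Altes chirplet has infinite Lipschitz regularity: for every α > 0, the frequency-weighted magnitude integral satisfies ∫_{0}^{∞} |U(ω)|·(1 + ω^α) dω = ω₀·√(π/κ)·exp(1/(4κ))·(1 + ω₀^α·exp((α² + 2α)/(4κ))), which is finite. -/
/-!
The chirp factor has modulus one, so only the log-normal envelope matters. Under `ω = exp t`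
the measure `exp (-κ (log (ω / ω₀))²) ω ^ β dω` becomes the Gaussian
`exp (-κ (t - log ω₀)² + (β + 1) t) dt`, and completing the square gives the log-normal moment
`√(π / κ) ω₀ ^ (β + 1) exp ((β + 1)² / (4κ))`; the theorem is the sum of the moments `β = 0`
and `β = α`.
-/

open MeasureTheory

open Real Set

section Gaussian

variable {b : ℝ} (hb : 0 < b) (c d : ℝ)
include hb

lemma exp_quadratic_eq_mul_exp_neg_mul_sq_sub (x : ℝ) :
    rexp (-b * x ^ 2 + c * x + d) =
      rexp (d + c ^ 2 / (4 * b)) * rexp (-b * (x - c / (2 * b)) ^ 2) := by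
  rw [← exp_add]
  congr 1
  field_simp
  ring

lemma integrable_exp_quadratic : Integrable (fun x : ℝ => rexp (-b * x ^ 2 + c * x + d)) := by
  simp_rw [exp_quadratic_eq_mul_exp_neg_mul_sq_sub hb]
  exact ((integrable_exp_neg_mul_sq hb).comp_sub_right _).const_mul _

lemma integral_exp_quadratic :
    ∫ x : ℝ, rexp (-b * x ^ 2 + c * x + d) = √(π / b) * rexp (d + c ^ 2 / (4 * b)) := by
  simp_rw [exp_quadratic_eq_mul_exp_neg_mul_sq_sub hb]
  rw [integral_const_mul, integral_sub_right_eq_self (fun x => rexp (-b * x ^ 2)),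
    integral_gaussian, mul_comm]

end Gaussian

section ExpSubstitution

variable {E : Type*} [NormedAddCommGroup E] [NormedSpace ℝ E] (g : ℝ → E)

theorem integrableOn_Ioi_zero_iff_integrable_exp_smul_comp_exp :
    IntegrableOn g (Ioi 0) ↔ Integrable (fun x => rexp x • g (rexp x)) := by
  rw [← range_exp, ← image_univ, ← integrableOn_univ]
  simpa [abs_of_pos (exp_pos _)] using integrableOn_image_iff_integrableOn_abs_deriv_smul
    MeasurableSet.univ (fun x _ => (hasDerivAt_exp x).hasDerivWithinAt) exp_injective.injOn g

theorem integral_Ioi_zero_eq_integral_exp_smul_comp_exp :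
    ∫ y in Ioi 0, g y = ∫ x, rexp x • g (rexp x) := by
  rw [← range_exp, ← image_univ, ← setIntegral_univ]
  simpa [abs_of_pos (exp_pos _)] using integral_image_eq_integral_abs_deriv_smul
    MeasurableSet.univ (fun x _ => (hasDerivAt_exp x).hasDerivWithinAt) exp_injective.injOn g

end ExpSubstitution

lemma exp_mul_lognormal_comp_exp {ω₀ : ℝ} (hω₀ : 0 < ω₀) (κ β t : ℝ) :
    rexp t * (rexp (-(κ * log (rexp t / ω₀) ^ 2)) * rexp t ^ β) =
      rexp (-κ * t ^ 2 + (2 * κ * log ω₀ + β + 1) * t + -(κ * log ω₀ ^ 2)) := by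
  rw [log_div (exp_pos t).ne' hω₀.ne', log_exp, ← exp_mul, ← exp_add, ← exp_add]
  congr 1
  ring

section LogNormalMoment

variable {κ ω₀ : ℝ} (hκ : 0 < κ) (hω₀ : 0 < ω₀) (β : ℝ)
include hκ hω₀

theorem integrableOn_lognormal_mul_rpow :
    IntegrableOn (fun ω => rexp (-(κ * log (ω / ω₀) ^ 2)) * ω ^ β) (Ioi 0) := by
  rw [integrableOn_Ioi_zero_iff_integrable_exp_smul_comp_exp]
  simp only [smul_eq_mul, exp_mul_lognormal_comp_exp hω₀]
  exact integrable_exp_quadratic hκ _ _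

theorem integral_lognormal_mul_rpow :
    ∫ ω in Ioi 0, rexp (-(κ * log (ω / ω₀) ^ 2)) * ω ^ β =
      √(π / κ) * ω₀ ^ (β + 1) * rexp ((β + 1) ^ 2 / (4 * κ)) := by
  rw [integral_Ioi_zero_eq_integral_exp_smul_comp_exp]
  simp only [smul_eq_mul, exp_mul_lognormal_comp_exp hω₀]
  rw [integral_exp_quadratic hκ, rpow_def_of_pos hω₀, mul_assoc √(π / κ), ← exp_add]
  congr 2
  field_simp
  ring

end LogNormalMoment

lemma norm_altes_of_pos (κ ω₀ lam : ℝ) {ω : ℝ} (hω : 0 < ω) :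
    ‖altes κ ω₀ lam ω‖ = rexp (-(κ * log (ω / ω₀) ^ 2)) := by
  have h : 2 * π * Complex.I * (log ω : ℂ) / (log lam : ℂ) =
      ((2 * π * log ω / log lam : ℝ) : ℂ) * Complex.I := by
    push_cast
    ring
  rw [altes, if_pos hω, norm_mul, h, Complex.norm_exp_ofReal_mul_I, mul_one,
    Complex.norm_exp, Complex.neg_re, Complex.ofReal_re]

theorem altes_infinite_regularity_general (κ ω₀ lam : ℝ) (hκ : 0 < κ) (hω₀ : 0 < ω₀) :
    ∀ α : ℝ, 0 < α →
      IntegrableOn (fun ω : ℝ => ‖altes κ ω₀ lam ω‖ * (1 + ω ^ α))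
        (Set.Ioi (0 : ℝ)) ∧
      (∫ ω in Set.Ioi (0 : ℝ), ‖altes κ ω₀ lam ω‖ * (1 + ω ^ α)) =
        ω₀ * Real.sqrt (Real.pi / κ) * Real.exp (1 / (4 * κ)) *
          (1 + ω₀ ^ α * Real.exp ((α ^ 2 + 2 * α) / (4 * κ))) := by
  intro α _
  set moment := fun (β ω : ℝ) => rexp (-(κ * log (ω / ω₀) ^ 2)) * ω ^ β
  have h_split : EqOn (fun ω => ‖altes κ ω₀ lam ω‖ * (1 + ω ^ α))
      (fun ω => moment 0 ω + moment α ω) (Ioi 0) := fun ω hω => by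
    simp only [moment, norm_altes_of_pos _ _ _ hω, rpow_zero, mul_add, mul_one]
  have h_int (β : ℝ) : IntegrableOn (moment β) (Ioi 0) :=
    integrableOn_lognormal_mul_rpow hκ hω₀ β
  refine ⟨((h_int 0).add (h_int α)).congr_fun h_split.symm measurableSet_Ioi, ?_⟩
  rw [setIntegral_congr_fun measurableSet_Ioi h_split, integral_add (h_int 0) (h_int α),
    integral_lognormal_mul_rpow hκ hω₀, integral_lognormal_mul_rpow hκ hω₀,
    zero_add, rpow_one, one_pow, rpow_add hω₀, rpow_one,
    show (α + 1) ^ 2 / (4 * κ) = 1 / (4 * κ) + (α ^ 2 + 2 * α) / (4 * κ) by ring, exp_add]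
  ring

/-- The Altes chirplet has infinite Lipschitz regularity: for every
α > 0, the frequency-weighted magnitude integral is finite and equals
ω₀·√(π/κ)·exp(1/(4κ))·(1 + ω₀^α·exp((α² + 2α)/(4κ))). -/
theorem altes_infinite_regularity (κ ω₀ lam : ℝ) (hκ : 0 < κ) (hω₀ : 0 < ω₀)
    (hlam : 0 < lam) (hlam1 : lam ≠ 1) :
    ∀ α : ℝ, 0 < α →
      IntegrableOn (fun ω : ℝ => ‖altes κ ω₀ lam ω‖ * (1 + ω ^ α))
        (Set.Ioi (0 : ℝ)) ∧
      (∫ ω in Set.Ioi (0 : ℝ), ‖altes κ ω₀ lam ω‖ * (1 + ω ^ α)) =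
        ω₀ * Real.sqrt (Real.pi / κ) * Real.exp (1 / (4 * κ)) *
          (1 + ω₀ ^ α * Real.exp ((α ^ 2 + 2 * α) / (4 * κ))) :=
  altes_infinite_regularity_general κ ω₀ lam hκ hω₀
end

section
/- Every iterated derivative of the Altes chirplet vanishes at the origin from the right: for every natural number n, the n-th derivative of the map ω ↦ exp(-κ·(log(ω/ω₀))²)·exp(2πi·log ω/log λ) on the interval (0,∞) tends to 0 as ω → 0⁺. -/
open Filter Topology Polynomial

/-!
On `(0, ∞)` the chirplet is `g ∘ log` with `g t = P(t) · exp(-κ t² + b t)` for a constant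
polynomial `P` and some `b ∈ ℂ`. Differentiating `g ∘ log` keeps this shape: the chain rule
contributes a factor `1/ω = exp(-log ω)`, which only shifts `b` to `b - 1`, and the polynomial
changes to `P' + P (b - 2κ t)`. Hence every derivative is again of this form, and since
`log ω → -∞` as `ω → 0⁺`, the Gaussian factor `exp(-κ t²)` beats any polynomial and any
exponential `exp(b t)`.
-/

namespace Altes

noncomputable def polyGauss (κ : ℝ) (p : ℂ[X]) (b : ℂ) (t : ℝ) : ℂ :=
  p.eval (t : ℂ) * Complex.exp (-κ * (t : ℂ) ^ 2 + b * t)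

lemma tendsto_neg_mul_sq_add_mul_atBot {κ : ℝ} (hκ : 0 < κ) (c : ℝ) :
    Tendsto (fun t : ℝ => -κ * t ^ 2 + c * t) atBot atBot := by
  have h : Tendsto (fun t : ℝ => c + -(κ * t)) atBot atTop :=
    tendsto_atTop_add_const_left _ c <|
      tendsto_neg_atBot_atTop.comp (tendsto_id.const_mul_atBot hκ)
  refine (tendsto_id.atBot_mul_atTop₀ h).congr fun t => ?_
  simp only [id]; ring

lemma tendsto_abs_pow_mul_exp_atBot (k : ℕ) :
    Tendsto (fun t : ℝ => |t| ^ k * Real.exp t) atBot (𝓝 0) := by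
  refine ((Real.tendsto_pow_mul_exp_neg_atTop_nhds_zero k).comp
    tendsto_neg_atBot_atTop).congr' ?_
  filter_upwards [eventually_le_atBot 0] with t ht
  simp [abs_of_nonpos ht]

lemma tendsto_pow_mul_exp_quadratic_atBot {κ : ℝ} (hκ : 0 < κ) (k : ℕ) (b : ℂ) :
    Tendsto (fun t : ℝ => (t : ℂ) ^ k * Complex.exp (-κ * (t : ℂ) ^ 2 + b * t))
      atBot (𝓝 0) := by
  rw [tendsto_zero_iff_norm_tendsto_zero]
  -- the norm is `(|t| ^ k * exp t) * exp (-κ t² + (re b - 1) t)`, a product of two null factors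
  have h := (tendsto_abs_pow_mul_exp_atBot k).mul <|
    Real.tendsto_exp_atBot.comp (tendsto_neg_mul_sq_add_mul_atBot hκ (b.re - 1))
  rw [zero_mul] at h
  refine h.congr fun t => ?_
  have hre : (-κ * (t : ℂ) ^ 2 + b * t).re = -κ * t ^ 2 + b.re * t := by simp [pow_two]
  simp only [Function.comp_apply, norm_mul, norm_pow, Complex.norm_real, Real.norm_eq_abs,
    Complex.norm_exp, hre, mul_assoc, ← Real.exp_add]
  congr 2
  ring

lemma tendsto_polyGauss_atBot {κ : ℝ} (hκ : 0 < κ) (p : ℂ[X]) (b : ℂ) :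
    Tendsto (polyGauss κ p b) atBot (𝓝 0) := by
  have h := tendsto_finsetSum (Finset.range (p.natDegree + 1)) fun i _ =>
    (tendsto_pow_mul_exp_quadratic_atBot hκ i b).const_mul (p.coeff i)
  simp only [mul_zero, Finset.sum_const_zero] at h
  refine h.congr fun t => ?_
  simp only [polyGauss, eval_eq_sum_range, Finset.sum_mul, mul_assoc]

lemma hasDerivAt_polyGauss (κ : ℝ) (p : ℂ[X]) (b : ℂ) (t : ℝ) :
    HasDerivAt (polyGauss κ p b)
      (polyGauss κ (derivative p + p * (C b - C (2 * κ : ℂ) * X)) b t) t := by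
  have hquad : HasDerivAt (fun z : ℂ => -κ * z ^ 2 + b * z) (-κ * (2 * t) + b) (t : ℂ) :=
    (((hasDerivAt_pow 2 (t : ℂ)).const_mul (-κ : ℂ)).add
      ((hasDerivAt_id (t : ℂ)).const_mul b)).congr_deriv (by norm_num)
  refine ((p.hasDerivAt (t : ℂ)).mul hquad.cexp).comp_ofReal.congr_deriv ?_
  simp only [polyGauss, eval_add, eval_mul, eval_sub, eval_C, eval_X]
  ring

lemma polyGauss_mul_exp_neg (κ : ℝ) (p : ℂ[X]) (b : ℂ) (t : ℝ) :
    polyGauss κ p b t * Complex.exp (-t) = polyGauss κ p (b - 1) t := by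
  simp only [polyGauss, mul_assoc, ← Complex.exp_add]
  ring_nf

lemma hasDerivAt_polyGauss_comp_log (κ : ℝ) (p : ℂ[X]) (b : ℂ) {ω : ℝ} (hω : 0 < ω) :
    HasDerivAt (polyGauss κ p b ∘ Real.log)
      (polyGauss κ (derivative p + p * (C b - C (2 * κ : ℂ) * X)) (b - 1) (Real.log ω))
      ω := by
  refine ((hasDerivAt_polyGauss κ p b _).scomp ω
    (Real.hasDerivAt_log hω.ne')).congr_deriv ?_
  rw [← polyGauss_mul_exp_neg, Complex.real_smul, mul_comm, ← Complex.ofReal_neg,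
    ← Complex.ofReal_exp, Real.exp_neg, Real.exp_log hω]

lemma exists_eqOn_iteratedDerivWithin (κ : ℝ) {F : ℝ → ℂ} {p : ℂ[X]} {b : ℂ}
    (hF : Set.EqOn F (polyGauss κ p b ∘ Real.log) (Set.Ioi 0)) (n : ℕ) :
    ∃ (q : ℂ[X]) (c : ℂ),
      Set.EqOn (iteratedDerivWithin n F (Set.Ioi 0)) (polyGauss κ q c ∘ Real.log)
        (Set.Ioi 0) := by
  induction n with
  | zero => exact ⟨p, b, by rwa [iteratedDerivWithin_zero]⟩
  | succ n ih =>
    obtain ⟨q, c, hq⟩ := ih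
    refine ⟨derivative q + q * (C c - C (2 * κ : ℂ) * X), c - 1, fun ω hω => ?_⟩
    rw [iteratedDerivWithin_succ, derivWithin_congr hq (hq hω),
      derivWithin_of_isOpen isOpen_Ioi hω, (hasDerivAt_polyGauss_comp_log κ q c hω).deriv]
    rfl

lemma tendsto_polyGauss_comp_log_nhdsGT_zero {κ : ℝ} (hκ : 0 < κ) (p : ℂ[X]) (b : ℂ) :
    Tendsto (polyGauss κ p b ∘ Real.log) (𝓝[>] 0) (𝓝 0) :=
  (tendsto_polyGauss_atBot hκ p b).comp Real.tendsto_log_nhdsGT_zero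

lemma chirplet_eqOn_polyGauss_comp_log (κ : ℝ) {ω₀ : ℝ} (hω₀ : ω₀ ≠ 0) (lam : ℝ) :
    Set.EqOn
      (fun ω : ℝ => Complex.exp (-(↑(κ * (Real.log (ω / ω₀)) ^ 2) : ℂ)) *
        Complex.exp (2 * Real.pi * Complex.I * Real.log ω / Real.log lam))
      (polyGauss κ (C (Complex.exp (-κ * Real.log ω₀ ^ 2)))
        (2 * κ * Real.log ω₀ + 2 * Real.pi * Complex.I / Real.log lam) ∘ Real.log)
      (Set.Ioi 0) := by
  intro ω hω
  simp only [Function.comp_apply, polyGauss, eval_C, ← Complex.exp_add,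
    Real.log_div (Set.mem_Ioi.mp hω).ne' hω₀]
  push_cast
  ring_nf

end Altes

theorem altes_iteratedDeriv_tendsto_zero_general (κ ω₀ lam : ℝ) (hκ : 0 < κ)
    (hω₀ : 0 < ω₀) (n : ℕ) :
    Tendsto
      (fun ω : ℝ =>
        iteratedDerivWithin n
          (fun ω : ℝ =>
            Complex.exp (-(↑(κ * (Real.log (ω / ω₀)) ^ 2) : ℂ)) *
              Complex.exp (2 * Real.pi * Complex.I * Real.log ω / Real.log lam))
          (Set.Ioi (0 : ℝ)) ω)
      (𝓝[>] (0 : ℝ)) (𝓝 0) := by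
  obtain ⟨p, b, hp⟩ := Altes.exists_eqOn_iteratedDerivWithin κ
    (Altes.chirplet_eqOn_polyGauss_comp_log κ hω₀.ne' lam) n
  exact (Altes.tendsto_polyGauss_comp_log_nhdsGT_zero hκ p b).congr'
    (eventuallyEq_nhdsWithin_of_eqOn hp).symm

/-- Every iterated derivative (within (0,∞)) of the Altes chirplet
formula tends to 0 as ω → 0⁺. -/
theorem altes_iteratedDeriv_tendsto_zero (κ ω₀ lam : ℝ) (hκ : 0 < κ)
    (hω₀ : 0 < ω₀) (hlam : 0 < lam) (hlam1 : lam ≠ 1) (n : ℕ) :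
    Tendsto
      (fun ω : ℝ =>
        iteratedDerivWithin n
          (fun ω : ℝ =>
            Complex.exp (-(↑(κ * (Real.log (ω / ω₀)) ^ 2) : ℂ)) *
              Complex.exp (2 * Real.pi * Complex.I * Real.log ω / Real.log lam))
          (Set.Ioi (0 : ℝ)) ω)
      (𝓝[>] (0 : ℝ)) (𝓝 0) :=
  altes_iteratedDeriv_tendsto_zero_general κ ω₀ lam hκ hω₀ n
end

section
/- The Altes chirplet satisfies the homogeneous self-similarity functional equation for all real orders: setting k = exp(1/(2κ)), for every real n and every ω > 0 one has ω^n·U(ω) = ω₀^n·exp(n²/(4κ))·exp(2πi·n/(2κ·log λ))·U(ω·k^{-n}). -/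
open Complex

noncomputable def altesPhase (κ a L t : ℝ) : ℂ :=
  -((κ * (t - a) ^ 2 : ℝ) : ℂ) + 2 * Real.pi * I * t / L

lemma altes_eq_exp_altesPhase {κ ω₀ lam ω : ℝ} (hω₀ : ω₀ ≠ 0) (hω : 0 < ω) :
    altes κ ω₀ lam ω = exp (altesPhase κ (Real.log ω₀) (Real.log lam) (Real.log ω)) := by
  rw [altes, if_pos hω, altesPhase, exp_add, Real.log_div hω.ne' hω₀]

lemma altesPhase_complete_square {κ : ℝ} (hκ : κ ≠ 0) (a L t n : ℝ) :
    ((t * n : ℝ) : ℂ) + altesPhase κ a L t =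
      ((a * n : ℝ) : ℂ) + ((n ^ 2 / (4 * κ) : ℝ) : ℂ) + 2 * Real.pi * I * n / (2 * κ * L) +
        altesPhase κ a L (t - n / (2 * κ)) := by
  have hκC : (κ : ℂ) ≠ 0 := ofReal_ne_zero.mpr hκ
  simp only [altesPhase]
  push_cast
  field_simp
  ring

lemma Real.log_mul_exp_rpow {x : ℝ} (hx : x ≠ 0) (c y : ℝ) :
    Real.log (x * Real.exp c ^ y) = Real.log x + y * c := by
  rw [Real.log_mul hx (Real.rpow_pos_of_pos (Real.exp_pos c) y).ne', ← Real.exp_mul,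
    Real.log_exp, mul_comm c]

theorem altes_self_similar_general (κ ω₀ lam : ℝ) (hκ : 0 < κ) (hω₀ : 0 < ω₀)
    (k : ℝ) (hk : k = Real.exp (1 / (2 * κ))) :
    ∀ n : ℝ, ∀ ω : ℝ, 0 < ω →
      (↑(ω ^ n) : ℂ) * altes κ ω₀ lam ω =
        (↑(ω₀ ^ n) : ℂ) * Complex.exp ((n ^ 2 / (4 * κ) : ℝ) : ℂ) *
          Complex.exp (2 * Real.pi * Complex.I * n / (2 * κ * Real.log lam)) *
          altes κ ω₀ lam (ω * k ^ (-n)) := by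
  intro n ω hω
  have hshift : Real.log (ω * k ^ (-n)) = Real.log ω - n / (2 * κ) := by
    rw [hk, Real.log_mul_exp_rpow hω.ne']
    ring
  have hpos : 0 < ω * k ^ (-n) := mul_pos hω (Real.rpow_pos_of_pos (hk ▸ Real.exp_pos _) _)
  rw [altes_eq_exp_altesPhase hω₀.ne' hω, altes_eq_exp_altesPhase hω₀.ne' hpos, hshift,
    Real.rpow_def_of_pos hω, Real.rpow_def_of_pos hω₀, ofReal_exp, ofReal_exp,
    ← exp_add, ← exp_add, ← exp_add, ← exp_add, altesPhase_complete_square hκ.ne']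

/-- The Altes chirplet satisfies the homogeneous self-similarity
functional equation for all real orders: with k = exp(1/(2κ)), for every real n
and every ω > 0,
ω^n·U(ω) = ω₀^n·exp(n²/(4κ))·exp(2πi·n/(2κ·log λ))·U(ω·k^{-n}). -/
theorem altes_self_similar (κ ω₀ lam : ℝ) (hκ : 0 < κ) (hω₀ : 0 < ω₀)
    (hlam : 0 < lam) (hlam1 : lam ≠ 1) (k : ℝ) (hk : k = Real.exp (1 / (2 * κ))) :
    ∀ n : ℝ, ∀ ω : ℝ, 0 < ω →
      (↑(ω ^ n) : ℂ) * altes κ ω₀ lam ω =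
        (↑(ω₀ ^ n) : ℂ) * Complex.exp ((n ^ 2 / (4 * κ) : ℝ) : ℂ) *
          Complex.exp (2 * Real.pi * Complex.I * n / (2 * κ * Real.log lam)) *
          altes κ ω₀ lam (ω * k ^ (-n)) :=
  altes_self_similar_general κ ω₀ lam hκ hω₀ k hk
end

section
/- Replacing the chirp rate λ by 1/λ conjugates and time-reverses the Altes chirplet: writing U_λ for the chirplet with chirp rate λ, one has U_{1/λ}(ω) = conj(U_λ(ω)) for every ω ∈ ℝ; consequently, the time-domain chirplets u_λ(t) = (1/2π)∫_ℝ U_λ(ω)·e^{iωt} dω (which are well defined since U_λ is integrable) satisfy u_{1/λ}(t) = conj(u_λ(-t)) for every real t. -/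
open MeasureTheory

/-- The time-domain Altes chirplet u(t) = (1/2π)∫ U(ω)·e^{iωt} dω. -/
noncomputable def altesTime (κ ω₀ lam : ℝ) : ℝ → ℂ := fun t =>
  (↑(1 / (2 * Real.pi)) : ℂ) *
    ∫ ω : ℝ, altes κ ω₀ lam ω * Complex.exp (Complex.I * ω * t)

/-!
Under the substitution `ω = eˣ` the density `U_λ(ω) dω` on `(0, ∞)` becomes `e^{q(x)} dx` for a
complex quadratic `q` with leading coefficient `-κ`, so `U_λ` is integrable. Since
`log (1/λ) = -log λ`, passing to `1/λ` conjugates the phase of `U_λ`; conjugating the inverse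
Fourier integral then flips the sign of `t`.
-/

theorem integrableOn_Ioi_iff_integrable_exp_smul_comp_exp {E : Type*} [NormedAddCommGroup E]
    [NormedSpace ℝ E] (f : ℝ → E) :
    IntegrableOn f (Set.Ioi 0) ↔ Integrable (fun x => Real.exp x • f (Real.exp x)) := by
  have := integrableOn_image_iff_integrableOn_abs_deriv_smul MeasurableSet.univ
    (fun x _ => (Real.hasDerivAt_exp x).hasDerivWithinAt) Real.exp_injective.injOn f
  simpa [Set.image_univ, Real.range_exp, abs_of_pos (Real.exp_pos _)] using this

noncomputable def altesProfile (κ ω₀ lam : ℝ) (ω : ℝ) : ℂ :=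
  Complex.exp (-(↑(κ * (Real.log (ω / ω₀)) ^ 2) : ℂ)) *
    Complex.exp (2 * Real.pi * Complex.I * Real.log ω / Real.log lam)

theorem altes_eq_indicator (κ ω₀ lam : ℝ) :
    altes κ ω₀ lam = (Set.Ioi 0).indicator (altesProfile κ ω₀ lam) := by
  ext ω
  simp [altes, altesProfile, Set.indicator_apply]

theorem exp_smul_altesProfile_exp (κ ω₀ lam : ℝ) (hω₀ : ω₀ ≠ 0) (x : ℝ) :
    Real.exp x • altesProfile κ ω₀ lam (Real.exp x) =
      Complex.exp (-κ * x ^ 2 +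
        (2 * κ * Real.log ω₀ + 1 + 2 * Real.pi * Complex.I / Real.log lam) * x +
          -κ * Real.log ω₀ ^ 2) := by
  rw [altesProfile, Real.log_div (Real.exp_pos x).ne' hω₀, Real.log_exp, Complex.real_smul,
    Complex.ofReal_exp, ← Complex.exp_add, ← Complex.exp_add]
  congr 1
  push_cast
  ring

theorem integrable_altes (κ ω₀ lam : ℝ) (hκ : 0 < κ) (hω₀ : 0 < ω₀) :
    Integrable (altes κ ω₀ lam) := by
  rw [altes_eq_indicator, integrable_indicator_iff measurableSet_Ioi,
    integrableOn_Ioi_iff_integrable_exp_smul_comp_exp]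
  simp_rw [exp_smul_altesProfile_exp κ ω₀ lam hω₀.ne']
  exact integrable_cexp_quadratic (b := κ) (by simpa using hκ) _ _

theorem altes_one_div (κ ω₀ lam ω : ℝ) :
    altes κ ω₀ (1 / lam) ω = starRingEnd ℂ (altes κ ω₀ lam ω) := by
  unfold altes
  split_ifs
  · rw [one_div, Real.log_inv, map_mul, ← Complex.exp_conj, ← Complex.exp_conj]
    congr 2 <;> simp [neg_div, div_neg, map_ofNat]
  · simp

theorem integral_conj_mul_exp_I_mul (f : ℝ → ℂ) (t : ℝ) :
    ∫ ω : ℝ, starRingEnd ℂ (f ω) * Complex.exp (Complex.I * ω * t) =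
      starRingEnd ℂ (∫ ω : ℝ, f ω * Complex.exp (Complex.I * ω * ↑(-t))) := by
  rw [← integral_conj]
  congr 1 with ω
  rw [map_mul, ← Complex.exp_conj]
  congr 2
  simp

theorem altes_reciprocal_chirp_rate_general (κ ω₀ lam : ℝ) (hκ : 0 < κ) (hω₀ : 0 < ω₀) :
    Integrable (altes κ ω₀ lam) ∧
    (∀ ω : ℝ, altes κ ω₀ (1 / lam) ω = starRingEnd ℂ (altes κ ω₀ lam ω)) ∧
    (∀ t : ℝ, altesTime κ ω₀ (1 / lam) t =
      starRingEnd ℂ (altesTime κ ω₀ lam (-t))) := by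
  refine ⟨integrable_altes κ ω₀ lam hκ hω₀, altes_one_div κ ω₀ lam, fun t => ?_⟩
  simp only [altesTime, altes_one_div, integral_conj_mul_exp_I_mul, map_mul, Complex.conj_ofReal]

/-- Replacing the chirp rate λ by 1/λ conjugates (in frequency)
and conjugates-and-time-reverses (in time) the Altes chirplet; the time-domain
chirplets are well defined since U_λ is integrable. -/
theorem altes_reciprocal_chirp_rate (κ ω₀ lam : ℝ) (hκ : 0 < κ) (hω₀ : 0 < ω₀)
    (hlam : 0 < lam) (hlam1 : lam ≠ 1) :
    Integrable (altes κ ω₀ lam) ∧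
    (∀ ω : ℝ, altes κ ω₀ (1 / lam) ω = starRingEnd ℂ (altes κ ω₀ lam ω)) ∧
    (∀ t : ℝ, altesTime κ ω₀ (1 / lam) t =
      starRingEnd ℂ (altesTime κ ω₀ lam (-t))) :=
  altes_reciprocal_chirp_rate_general κ ω₀ lam hκ hω₀
end

section
/- Differentiating the homogeneous functional equation at order zero: let k > 1, let U : (0,∞) → ℂ and C : ℝ → ℂ with C(0) = 1 and C differentiable at 0, and suppose ω^n·U(ω) = C(n)·U(ω·k^{-n}) holds for all real n and all ω > 0. If U is differentiable at a point ω > 0, then ω·(log k)·U'(ω) = (C'(0) - log ω)·U(ω). -/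
/-! Both sides of the functional equation are functions of `n` that agree everywhere, so their
derivatives at `n = 0` agree. There `k ^ (-n) = 1` and `C 0 = 1`, and the chain rule turns the
equality of derivatives into `log ω * U ω = C'(0) * U ω - ω * log k * U'(ω)`. -/

open Real

theorem hasDerivAt_ofReal_rpow_const {b : ℝ} (hb : 0 < b) (x : ℝ) :
    HasDerivAt (fun n : ℝ => ((b ^ n : ℝ) : ℂ)) ((b ^ x * log b : ℝ) : ℂ) x :=
  (hasStrictDerivAt_const_rpow hb x).hasDerivAt.ofReal_comp

theorem hasDerivAt_mul_rpow_neg {a b : ℝ} (hb : 0 < b) (x : ℝ) :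
    HasDerivAt (fun n : ℝ => a * b ^ (-n)) (-(a * b ^ (-x) * log b)) x :=
  (((hasStrictDerivAt_const_rpow hb (-x)).hasDerivAt.comp x (hasDerivAt_neg x)).const_mul a
    ).congr_deriv (by ring)

theorem HasDerivAt.comp_mul_rpow_neg {E : Type*} [NormedAddCommGroup E] [NormedSpace ℝ E]
    {U : ℝ → E} {U' : E} {a b x : ℝ} (hb : 0 < b) (hU : HasDerivAt U U' (a * b ^ (-x))) :
    HasDerivAt (fun n : ℝ => U (a * b ^ (-n))) (-(a * b ^ (-x) * Real.log b) • U') x :=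
  hU.scomp x (hasDerivAt_mul_rpow_neg hb x)

/-- Differentiating the homogeneous functional equation at order
zero: if k > 1, C(0) = 1, C is differentiable at 0, and
ω^n·U(ω) = C(n)·U(ω·k^{-n}) for all real n and ω > 0, then at any ω > 0 where
U is differentiable one has ω·(log k)·U'(ω) = (C'(0) - log ω)·U(ω). -/
theorem altes_functional_equation_deriv (k : ℝ) (hk : 1 < k)
    (U : ℝ → ℂ) (C : ℝ → ℂ) (hC0 : C 0 = 1) (hCdiff : DifferentiableAt ℝ C 0)
    (hfun : ∀ n : ℝ, ∀ ω : ℝ, 0 < ω →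
      (↑(ω ^ n) : ℂ) * U ω = C n * U (ω * k ^ (-n)))
    (ω : ℝ) (hω : 0 < ω) (hU : DifferentiableAt ℝ U ω) :
    (ω : ℂ) * (Real.log k : ℂ) * deriv U ω =
      (deriv C 0 - (Real.log ω : ℂ)) * U ω := by
  have hLHS : HasDerivAt (fun n : ℝ => (↑(ω ^ n) : ℂ) * U ω) (log ω * U ω) 0 := by
    simpa using (hasDerivAt_ofReal_rpow_const hω 0).mul_const (U ω)
  have hRHS : HasDerivAt (fun n : ℝ => C n * U (ω * k ^ (-n)))
      (deriv C 0 * U ω - ω * log k * deriv U ω) 0 := by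
    have hU0 : HasDerivAt U (deriv U ω) (ω * k ^ (-0 : ℝ)) := by simpa using hU.hasDerivAt
    have hV := hU0.comp_mul_rpow_neg (one_pos.trans hk)
    exact (hCdiff.hasDerivAt.mul hV).congr_deriv (by
      simp only [neg_zero, rpow_zero, mul_one, hC0, neg_smul, Complex.real_smul,
        Complex.ofReal_mul, mul_neg, one_mul]
      ring)
  have hfun_ω : (fun n : ℝ => (↑(ω ^ n) : ℂ) * U ω) = fun n => C n * U (ω * k ^ (-n)) :=
    funext fun n => hfun n ω hω
  rw [hfun_ω] at hLHS
  linear_combination hLHS.unique hRHS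
end

section
/- Scale invariance of the Hyperbolic Chirplet Transform: set k = exp(1/(2κ)), ν = 2κ·log ω₀ and c = 1/(2κ·log λ). Let S : ℝ → ℂ, let b ∈ ℝ, let n ∈ ℝ, and suppose the function ω ↦ S(ω)·ω^n·conj(U(ω)) is integrable on (0,∞). Then, with scale a = k^{-n}, the transform coefficient C_u(a,b) = (√a/(2π))·∫_{0}^{∞} S(ω)·conj(U(aω))·e^{iωb} dω equals k^{-n/2 - nν - n²/2}·exp(2πi·n·c)·(1/(2π))·∫_{0}^{∞} S(ω)·ω^n·conj(U(ω))·e^{iωb} dω; hence the transform at every scale k^{-n} is determined by moment-weighted integrals of the signal spectrum against the single mother chirplet U. -/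
open MeasureTheory

/-- Scale invariance of the Hyperbolic Chirplet Transform: with
k = exp(1/(2κ)), ν = 2κ·log ω₀, c = 1/(2κ·log λ) and scale a = k^{-n}, the
transform coefficient (√a/(2π))·∫₀^∞ S(ω)·conj(U(aω))·e^{iωb} dω equals
k^{-n/2 - nν - n²/2}·exp(2πi·n·c)·(1/(2π))·∫₀^∞ S(ω)·ω^n·conj(U(ω))·e^{iωb} dω. -/
theorem hct_scale_invariance (κ ω₀ lam : ℝ) (hκ : 0 < κ) (hω₀ : 0 < ω₀)
    (hlam : 0 < lam) (hlam1 : lam ≠ 1)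
    (k ν c : ℝ) (hk : k = Real.exp (1 / (2 * κ))) (hν : ν = 2 * κ * Real.log ω₀)
    (hc : c = 1 / (2 * κ * Real.log lam))
    (S : ℝ → ℂ) (b n : ℝ)
    (hS : IntegrableOn
      (fun ω : ℝ => S ω * (↑(ω ^ n) : ℂ) * starRingEnd ℂ (altes κ ω₀ lam ω))
      (Set.Ioi (0 : ℝ)))
    (a : ℝ) (ha : a = k ^ (-n)) :
    (↑(Real.sqrt a) : ℂ) / (2 * Real.pi) *
        ∫ ω in Set.Ioi (0 : ℝ),
          S ω * starRingEnd ℂ (altes κ ω₀ lam (a * ω)) *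
            Complex.exp (Complex.I * ω * b) =
      (↑(k ^ (-n / 2 - n * ν - n ^ 2 / 2)) : ℂ) *
        Complex.exp (2 * Real.pi * Complex.I * n * c) *
        ((1 / (2 * Real.pi) : ℝ) : ℂ) *
        ∫ ω in Set.Ioi (0 : ℝ),
          S ω * (↑(ω ^ n) : ℂ) * starRingEnd ℂ (altes κ ω₀ lam ω) *
            Complex.exp (Complex.I * ω * b) := by
  have hκ0 : κ ≠ 0 := ne_of_gt hκ
  have hll : Real.log lam ≠ 0 := by
    intro h
    rcases Real.log_eq_zero.mp h with h | h | h
    · exact absurd h (ne_of_gt hlam)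
    · exact hlam1 h
    · linarith
  have hllC : ((Real.log lam : ℝ) : ℂ) ≠ 0 := Complex.ofReal_ne_zero.mpr hll
  have haexp : a = Real.exp (1 / (2 * κ) * (-n)) := by
    rw [ha, hk, Real.rpow_def_of_pos (Real.exp_pos _), Real.log_exp]
  have ha0 : 0 < a := haexp ▸ Real.exp_pos _
  have hla : Real.log a = 1 / (2 * κ) * (-n) := by rw [haexp, Real.log_exp]
  -- the constant
  set C : ℂ := (↑(Real.exp (-(n * Real.log ω₀) - n ^ 2 / (4 * κ))) : ℂ) *
      Complex.exp (2 * Real.pi * Complex.I * n * c) with hC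
  have hpt : ∀ ω ∈ Set.Ioi (0 : ℝ),
      S ω * starRingEnd ℂ (altes κ ω₀ lam (a * ω)) * Complex.exp (Complex.I * ω * b) =
      C * (S ω * (↑(ω ^ n) : ℂ) * starRingEnd ℂ (altes κ ω₀ lam ω) *
        Complex.exp (Complex.I * ω * b)) := by
    intro ω hω
    rw [Set.mem_Ioi] at hω
    have haω : 0 < a * ω := mul_pos ha0 hω
    have key : Complex.exp (-(↑(κ * (Real.log (a * ω / ω₀)) ^ 2) : ℂ)) *
        Complex.exp (starRingEnd ℂ (2 * Real.pi * Complex.I * Real.log (a * ω) / Real.log lam)) =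
        C * ((↑(ω ^ n) : ℂ) *
          (Complex.exp (-(↑(κ * (Real.log (ω / ω₀)) ^ 2) : ℂ)) *
            Complex.exp (starRingEnd ℂ (2 * Real.pi * Complex.I * Real.log ω / Real.log lam)))) := by
      rw [hC, Real.rpow_def_of_pos hω, Complex.ofReal_exp, Complex.ofReal_exp,
        ← Complex.exp_add]
      simp only [← Complex.exp_add]
      congr 1
      simp only [map_div₀, map_mul, Complex.conj_I, Complex.conj_ofReal, map_ofNat]
      have h1 : Real.log (a * ω / ω₀) = Real.log a + Real.log ω - Real.log ω₀ := by
        rw [Real.log_div (ne_of_gt haω) (ne_of_gt hω₀), Real.log_mul (ne_of_gt ha0) (ne_of_gt hω)]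
      have h2 : Real.log (a * ω) = Real.log a + Real.log ω := by
        rw [Real.log_mul (ne_of_gt ha0) (ne_of_gt hω)]
      have h3 : Real.log (ω / ω₀) = Real.log ω - Real.log ω₀ := by
        rw [Real.log_div (ne_of_gt hω) (ne_of_gt hω₀)]
      rw [h1, h2, h3, hla, hc]
      have hκC : ((κ : ℝ) : ℂ) ≠ 0 := Complex.ofReal_ne_zero.mpr hκ0
      have f1R : κ * (1 / (2 * κ) * -n + Real.log ω - Real.log ω₀) ^ 2 =
          -(-(n * Real.log ω₀) - n ^ 2 / (4 * κ)) - Real.log ω * n +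
            κ * (Real.log ω - Real.log ω₀) ^ 2 := by
        field_simp
        ring
      rw [f1R]
      push_cast
      ring
    calc S ω * starRingEnd ℂ (altes κ ω₀ lam (a * ω)) * Complex.exp (Complex.I * ω * b)
        = S ω * (Complex.exp (-(↑(κ * (Real.log (a * ω / ω₀)) ^ 2) : ℂ)) *
            Complex.exp (starRingEnd ℂ (2 * Real.pi * Complex.I * Real.log (a * ω) / Real.log lam))) *
            Complex.exp (Complex.I * ω * b) := by
          rw [altes, if_pos haω, map_mul, ← Complex.exp_conj, ← Complex.exp_conj]
          congr 3
          simp [map_neg, Complex.conj_ofReal]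
      _ = C * (S ω * (↑(ω ^ n) : ℂ) * starRingEnd ℂ (altes κ ω₀ lam ω) *
            Complex.exp (Complex.I * ω * b)) := by
          rw [altes]
          simp only [if_pos hω, map_mul, ← Complex.exp_conj]
          have : starRingEnd ℂ (-(↑(κ * (Real.log (ω / ω₀)) ^ 2) : ℂ)) =
              -(↑(κ * (Real.log (ω / ω₀)) ^ 2) : ℂ) := by simp [Complex.conj_ofReal]
          rw [this]
          linear_combination (S ω * Complex.exp (Complex.I * ω * b)) * key
  rw [setIntegral_congr_fun measurableSet_Ioi hpt, integral_const_mul]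
  have hconst : (↑(Real.sqrt a) : ℂ) / (2 * Real.pi) * C =
      (↑(k ^ (-n / 2 - n * ν - n ^ 2 / 2)) : ℂ) *
        Complex.exp (2 * Real.pi * Complex.I * n * c) * ((1 / (2 * Real.pi) : ℝ) : ℂ) := by
    have hsqrt : Real.sqrt a = Real.exp (1 / (2 * κ) * -n / 2) := by
      rw [haexp, show Real.exp (1 / (2 * κ) * -n) = Real.exp (1 / (2 * κ) * -n / 2) ^ 2 by
        rw [sq, ← Real.exp_add]; congr 1; ring]
      exact Real.sqrt_sq (Real.exp_pos _).le
    have hreal : Real.sqrt a * Real.exp (-(n * Real.log ω₀) - n ^ 2 / (4 * κ)) =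
        k ^ (-n / 2 - n * ν - n ^ 2 / 2) := by
      rw [hsqrt, ← Real.exp_add, hk, Real.rpow_def_of_pos (Real.exp_pos _), Real.log_exp]
      congr 1
      rw [hν]
      field_simp
      ring
    rw [hC, ← hreal, Complex.ofReal_mul]
    simp only [Complex.ofReal_exp]
    push_cast
    ring
  rw [hC] at hconst ⊢
  rw [← mul_assoc, hconst]
end
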